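/- Single connected component: for every natural number n, any two histories of length n are connected by finitely many steps of the relation R; that is, the set of all histories of length n forms a single R-connected component (equivalently, the induced Kripke model on histories of length n has exactly one strongly connected component with respect to the union of the two indistinguishability relations). -/

import Mathlib

/-- Transition function: reset (`false`) always yields Off (`false`),
    toggle (`true`) flips the location. -/
def step (l a : Bool) : Bool := if a then !l else false

/-- A history: an initial location together with a list of actions. -/
abbrev Hist := Bool × List Bool

/-- The sequence of locations visited along a history (length = #actions + 1). -/
def locSeq (h : Hist) : List Bool := List.scanl step h.1 h.2

/-- The last location of a history (the final entry of `locSeq`). -/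
def lastLoc (h : Hist) : Bool := List.foldl step h.1 h.2

/-- Appending an action to a history. -/
def ext (h : Hist) (a : Bool) : Hist := (h.1, h.2 ++ [a])

/-- Human indistinguishability: equal action lists. -/
def humanInd (h₁ h₂ : Hist) : Prop := h₁.2 = h₂.2

/-- AI indistinguishability: equal location sequences. -/
def aiInd (h₁ h₂ : Hist) : Prop := locSeq h₁ = locSeq h₂

/-- The union of the two indistinguishability relations. -/
def GRel (h₁ h₂ : Hist) : Prop := humanInd h₁ h₂ ∨ aiInd h₁ h₂

/-- The history `(Off, rⁿ)`: initial location Off, then `n` reset actions. -/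
def hn (n : ℕ) : Hist := (false, List.replicate n false)

/-- `reachLe k h g`: `g` is reachable from `h` by at most `k` steps of `GRel`. -/
def reachLe : ℕ → Hist → Hist → Prop
  | 0, h, g => h = g
  | k+1, h, g => reachLe k h g ∨ ∃ h', GRel h h' ∧ reachLe k h' g

/-!
Induct on the length. Both relations are stable under appending a common action. From On both
actions lead to Off, so if `p` ends in On then `p a` and `p b` are AI-indistinguishable. Given
histories `h₀ a` and `g₀ b`, the induction hypothesis connects `h₀` and `g₀` to a history `p` of
the same length ending in On, whence `h₀ a ~ p a ~ p b ~ g₀ b`.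
-/

lemma lastLoc_ext (h : Hist) (a : Bool) : lastLoc (ext h a) = step (lastLoc h) a := by
  simp [lastLoc, ext, List.foldl_append]

lemma locSeq_ext (h : Hist) (a : Bool) :
    locSeq (ext h a) = locSeq h ++ [step (lastLoc h) a] := by
  simp [locSeq, lastLoc, ext, List.scanl_append]

lemma lastLoc_eq_of_aiInd {h g : Hist} (hg : aiInd h g) : lastLoc h = lastLoc g := by
  have key : (locSeq h).getLast? = (locSeq g).getLast? := congrArg List.getLast? hg
  simpa [locSeq, lastLoc, List.getLast?_scanl] using key

lemma GRel.ext {h g : Hist} (a : Bool) (hg : GRel h g) : GRel (ext h a) (ext g a) := by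
  rcases hg with hum | ai
  · exact Or.inl (congrArg (· ++ [a]) hum)
  · right
    rw [aiInd, locSeq_ext, locSeq_ext, ai, lastLoc_eq_of_aiInd ai]

lemma reflTransGen_GRel_ext {h g : Hist} (a : Bool) (hg : Relation.ReflTransGen GRel h g) :
    Relation.ReflTransGen GRel (ext h a) (ext g a) :=
  hg.lift (ext · a) fun _ _ => GRel.ext a

lemma step_true (a : Bool) : step true a = false := by
  cases a <;> rfl

lemma aiInd_ext_of_lastLoc_eq_true {h : Hist} (hOn : lastLoc h = true) (a b : Bool) :
    aiInd (ext h a) (ext h b) := by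
  rw [aiInd, locSeq_ext, locSeq_ext, hOn, step_true, step_true]

lemma exists_length_eq_lastLoc_eq (m : ℕ) (l : Bool) :
    ∃ p : Hist, p.2.length = m ∧ lastLoc p = l := by
  induction m generalizing l with
  | zero => exact ⟨(l, []), rfl, rfl⟩
  | succ m ih =>
    obtain ⟨p, hlen, hlast⟩ := ih (!l)
    refine ⟨ext p true, by simp [ext, hlen], ?_⟩
    rw [lastLoc_ext, hlast]
    cases l <;> rfl

lemma exists_ext_eq_of_length_eq_succ {h : Hist} {m : ℕ} (hlen : h.2.length = m + 1) :
    ∃ h₀ a, h₀.2.length = m ∧ ext h₀ a = h := by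
  obtain ⟨l, as⟩ := h
  rcases List.eq_nil_or_concat as with rfl | ⟨bs, b, rfl⟩
  · simp at hlen
  · exact ⟨(l, bs), b, by simpa using hlen, by simp [ext]⟩

/-- single connected component: any two histories of length `n`
    are connected by finitely many steps of `GRel`. -/
theorem stmt9 (n : ℕ) (h g : Hist) (hl : h.2.length = n) (hg : g.2.length = n) :
    Relation.ReflTransGen GRel h g := by
  induction n generalizing h g with
  | zero =>
    exact .single (Or.inl ((List.eq_nil_of_length_eq_zero hl).trans
      (List.eq_nil_of_length_eq_zero hg).symm))
  | succ m ih =>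
    obtain ⟨h₀, a, hl₀, rfl⟩ := exists_ext_eq_of_length_eq_succ hl
    obtain ⟨g₀, b, hg₀, rfl⟩ := exists_ext_eq_of_length_eq_succ hg
    obtain ⟨p, hp, hOn⟩ := exists_length_eq_lastLoc_eq m true
    have bridge : GRel (ext p a) (ext p b) := Or.inr (aiInd_ext_of_lastLoc_eq_true hOn a b)
    exact ((reflTransGen_GRel_ext a (ih h₀ p hl₀ hp)).tail bridge).trans
      (reflTransGen_GRel_ext b (ih p g₀ hp hg₀))
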